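/- Let Γ be a group, n ≥ 2, and let f : Γ → Sym(n) be a group homomorphism that defines a transitive action of Γ on [n]. Define Ψ_n : Sym(n) → Sym(n−1) by Ψ_n(σ)(x) = σ(x) if σ(x) ≠ n and Ψ_n(σ)(x) = σ(σ(x)) if σ(x) = n, for x ∈ [n−1], and set f̂ = Ψ_n ∘ f : Γ → Sym(n−1). Then defect_∞(f̂) ≤ 2/(n−1), and for every group homomorphism h : Γ → Sym(n−1), d_∞(h, f̂) ≥ 1/2 − 1/(n−1). -/

import Mathlib

open Finset

/-- Extend a permutation of `Fin n` to a partial function `ℕ → Option ℕ`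
(`none` playing the role of the dummy symbol `⋆`). -/
def permExt {n : ℕ} (σ : Equiv.Perm (Fin n)) : ℕ → Option ℕ :=
  fun x => if h : x < n then some ((σ ⟨x, h⟩ : Fin n) : ℕ) else none

/-- The (extended) normalized Hamming distance between permutations of possibly
different sizes.  For `n = N` it is `|{x : σ x ≠ τ x}| / n`; for `n ≤ N` it is
`(|{x ∈ [n] : σ x ≠ τ x}| + (N - n)) / N`. -/
noncomputable def dH {n N : ℕ} (σ : Equiv.Perm (Fin n)) (τ : Equiv.Perm (Fin N)) : ℝ :=
  (((Finset.range (max n N)).filter fun x => permExt σ x ≠ permExt τ x).card : ℝ)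
    / ((max n N : ℕ) : ℝ)

/-- The uniform local defect of a map into a symmetric group. -/
noncomputable def defectInfty {Γ : Type*} [Group Γ] {n : ℕ}
    (f : Γ → Equiv.Perm (Fin n)) : ℝ :=
  ⨆ p : Γ × Γ, dH (f (p.1 * p.2)) (f p.1 * f p.2)

/-- The uniform distance between two maps into (possibly different) symmetric groups. -/
noncomputable def dInfty {Γ : Type*} {n N : ℕ}
    (f : Γ → Equiv.Perm (Fin n)) (h : Γ → Equiv.Perm (Fin N)) : ℝ :=
  ⨆ γ : Γ, dH (f γ) (h γ)

/-- A finitely-additive probability measure on (the power set of) `Γ`. -/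
def IsFinAddProb {Γ : Type*} (m : Set Γ → ℝ) : Prop :=
  (∀ A : Set Γ, 0 ≤ m A ∧ m A ≤ 1) ∧ m Set.univ = 1 ∧
    ∀ A B : Set Γ, Disjoint A B → m (A ∪ B) = m A + m B

/-- Left invariance of a finitely-additive measure. -/
def LeftInvariant {Γ : Type*} [Group Γ] (m : Set Γ → ℝ) : Prop :=
  ∀ (γ : Γ) (A : Set Γ), m ((fun a => γ * a) '' A) = m A

/-- Right invariance of a finitely-additive measure. -/
def RightInvariant {Γ : Type*} [Group Γ] (m : Set Γ → ℝ) : Prop :=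
  ∀ (γ : Γ) (A : Set Γ), m ((fun a => a * γ) '' A) = m A

/-- Inverse invariance of a finitely-additive measure. -/
def InvInvariant {Γ : Type*} [Group Γ] (m : Set Γ → ℝ) : Prop :=
  ∀ A : Set Γ, m A⁻¹ = m A

/-- A discrete group is amenable if it admits a left-invariant finitely-additive
probability measure. -/
def IsAmenable (Γ : Type*) [Group Γ] : Prop :=
  ∃ m : Set Γ → ℝ, IsFinAddProb m ∧ LeftInvariant m

/-- A function between groups is symmetric if it sends `1 ↦ 1` and respects inverses. -/
def IsSymmetricMap {Γ G : Type*} [Group Γ] [Group G] (f : Γ → G) : Prop :=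
  f 1 = 1 ∧ ∀ γ : Γ, f γ⁻¹ = (f γ)⁻¹

/-- The weight `w(x →γ→ y)` : the measure of the set of supporters
`T(x →γ→ y) = { t : f(t)(f(t⁻¹γ)(x)) = y }`. -/
def weight {Γ : Type*} [Group Γ] {n : ℕ} (m : Set Γ → ℝ)
    (f : Γ → Equiv.Perm (Fin n)) (x : Fin n) (γ : Γ) (y : Fin n) : ℝ :=
  m { t : Γ | f t (f (t⁻¹ * γ) x) = y }

/-!
Write `⋆` for the deleted point. Away from `⋆` and its `f γ`-preimage, `f̂ γ` agrees with `f γ`;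
this gives the defect bound, and reduces the distance bound to showing that `f γ` and `q γ`
agree on fewer than half the points for some `γ`, where `q` extends `h` by fixing `⋆`.
Pass to the finite image `G` of `(f, q)`. For every `x` some `a ∈ G` fixes `x` under `q` but
moves it under `f`: otherwise `f g x` would be a function of `q g x`, and by transitivity of `f`
the `q`-orbit of `x` would be everything, although `⋆` is `q`-fixed. Right multiplication by `a`
then moves `{g | f g x = q g x}` into its complement, so at most half of `G` agrees at `x`.
Summing over `x`, and noting that `g = 1` agrees everywhere, some `g` agrees on fewer than
`n / 2` points.
-/

open Equiv

lemma card_filter_eq_le_one_of_injective {ι : Type*} [Fintype ι] {g : ι → ℕ}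
    (hg : Function.Injective g) (k : ℕ) : #{i | g i = k} ≤ 1 :=
  card_le_one.mpr fun _ ha _ hb => hg ((mem_filter.mp ha).2.trans (mem_filter.mp hb).2.symm)

section TwoActions

variable {Γ G α : Type*} [Group Γ] [Group G]

lemma exists_apply_eq_self_and_apply_ne_self [Finite α] [Nontrivial α] (f q : Γ →* Perm α)
    (hf : ∀ x y, ∃ γ, f γ x = y) {star : α} (hq : ∀ γ, q γ star = star) (x : α) :
    ∃ a, q a x = x ∧ f a x ≠ x := by
  by_contra! hx
  choose g hg using hf x
  have hinj : Function.Injective fun y => q (g y) x := by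
    intro y z hyz
    have hfix : q ((g y)⁻¹ * g z) x = x := by
      simp only [map_mul, map_inv, Perm.mul_apply, Perm.inv_eq_iff_eq]
      exact hyz.symm
    have := hx _ hfix
    simp only [map_mul, map_inv, Perm.mul_apply, Perm.inv_eq_iff_eq] at this
    rw [← hg y, ← hg z, this]
  have hsurj := Finite.injective_iff_surjective.mp hinj
  obtain ⟨y, hy⟩ := hsurj star
  have hxstar : x = star := (q (g y)).injective (hy.trans (hq _).symm)
  obtain ⟨z, hz⟩ := exists_ne star
  obtain ⟨y', hy'⟩ := hsurj z
  exact hz (by simpa [hxstar, hq] using hy'.symm)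

variable [DecidableEq α]

lemma two_mul_card_apply_eq_le [Fintype G] (f q : G →* Perm α) {x : α} {a : G}
    (hqa : q a x = x) (hfa : f a x ≠ x) : 2 * #{g | f g x = q g x} ≤ Fintype.card G := by
  set S : Finset G := {g | f g x = q g x}
  have hmap : S.map (mulRightEmbedding a) ⊆ ({g | ¬f g x = q g x} : Finset G) := by
    intro _ hga
    obtain ⟨g, hg, rfl⟩ := mem_map.mp hga
    simp only [S, mem_filter, mem_univ, true_and] at hg ⊢
    simpa [hqa, ← hg] using hfa
  have hsplit : #S + #({g | ¬f g x = q g x} : Finset G) = Fintype.card G :=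
    card_filter_add_card_filter_not _
  have := card_le_card hmap
  rw [card_map] at this
  omega

variable [Fintype α] [Nontrivial α]

lemma exists_two_mul_card_apply_eq_lt_of_finite [Fintype G] (f q : G →* Perm α)
    (hf : ∀ x y, ∃ g, f g x = y) {star : α} (hq : ∀ g, q g star = star) :
    ∃ g, 2 * #{x | f g x = q g x} < Fintype.card α := by
  by_contra! h
  have hlt : ∑ _g : G, Fintype.card α < ∑ g : G, 2 * #{x | f g x = q g x} :=
    sum_lt_sum (fun g _ => h g) ⟨1, mem_univ _, by simp [Fintype.card_pos]⟩
  have hle : ∑ x : α, 2 * #{g | f g x = q g x} ≤ ∑ _x : α, Fintype.card G :=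
    sum_le_sum fun x _ =>
      let ⟨_, hqa, hfa⟩ := exists_apply_eq_self_and_apply_ne_self f q hf hq x
      two_mul_card_apply_eq_le f q hqa hfa
  have hcomm : ∑ g : G, #{x | f g x = q g x} = ∑ x : α, #{g | f g x = q g x} := by
    simp only [card_filter]
    exact sum_comm
  simp only [← mul_sum, hcomm, sum_const, card_univ, smul_eq_mul] at hlt hle
  linarith [mul_comm (Fintype.card G) (Fintype.card α)]

lemma exists_two_mul_card_apply_eq_lt (f q : Γ →* Perm α)
    (hf : ∀ x y, ∃ γ, f γ x = y) {star : α} (hq : ∀ γ, q γ star = star) :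
    ∃ γ, 2 * #{x | f γ x = q γ x} < Fintype.card α := by
  let G := (f.prod q).range
  have : Fintype G := Fintype.ofFinite G
  obtain ⟨⟨_, γ, rfl⟩, hγ⟩ := exists_two_mul_card_apply_eq_lt_of_finite
    ((MonoidHom.fst _ _).comp G.subtype) ((MonoidHom.snd _ _).comp G.subtype)
    (fun x y => let ⟨γ, hγ⟩ := hf x y; ⟨⟨_, γ, rfl⟩, hγ⟩) (star := star)
    (fun ⟨_, γ, hγ⟩ => by simpa [← hγ] using hq γ)
  exact ⟨γ, hγ⟩

end TwoActions

lemma dH_le_one {n N : ℕ} (σ : Perm (Fin n)) (τ : Perm (Fin N)) : dH σ τ ≤ 1 := by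
  unfold dH
  rcases Nat.eq_zero_or_pos (max n N) with h | h
  · simp [h]
  · rw [div_le_one (by exact_mod_cast h)]
    exact_mod_cast (card_filter_le _ _).trans (by simp)

lemma dH_eq_card {M : ℕ} (σ τ : Perm (Fin M)) : dH σ τ = #{z | σ z ≠ τ z} / (M : ℝ) := by
  have hext (π : Perm (Fin M)) (z : Fin M) : permExt π z = some (π z : ℕ) := dif_pos z.isLt
  rw [dH, Nat.max_self, card_filter, ← Fin.sum_univ_eq_sum_range, card_filter]
  simp only [hext, ne_eq, Option.some_inj, Fin.val_inj]

section LastDeletion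

variable {Γ : Type*} [Group Γ] {n : ℕ}

/-- `τ = Ψ_n(σ)`, with the deleted point `n` of the paper being `n - 1` in `Fin n`. -/
def IsLastDeletion (σ : Perm (Fin n)) (τ : Perm (Fin (n - 1))) : Prop :=
  ∀ x : Fin (n - 1), (τ x : ℕ) =
    if (σ (Fin.castLE (Nat.sub_le n 1) x) : ℕ) = n - 1
    then (σ (σ (Fin.castLE (Nat.sub_le n 1) x)) : ℕ)
    else (σ (Fin.castLE (Nat.sub_le n 1) x) : ℕ)

lemma IsLastDeletion.castLE_apply {σ : Perm (Fin n)} {τ : Perm (Fin (n - 1))}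
    (h : IsLastDeletion σ τ) {x : Fin (n - 1)}
    (hx : (σ (Fin.castLE (Nat.sub_le n 1) x) : ℕ) ≠ n - 1) :
    Fin.castLE (Nat.sub_le n 1) (τ x) = σ (Fin.castLE (Nat.sub_le n 1) x) :=
  Fin.ext (by rw [Fin.val_castLE, h x, if_neg hx])

lemma card_filter_apply_eq_last_le_one (σ : Perm (Fin n)) :
    #{x : Fin (n - 1) | (σ (Fin.castLE (Nat.sub_le n 1) x) : ℕ) = n - 1} ≤ 1 :=
  card_filter_eq_le_one_of_injective
    (Fin.val_injective.comp (σ.injective.comp (Fin.castLE_injective _))) _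

lemma IsLastDeletion.card_apply_eq_le {σ : Perm (Fin n)} {τ : Perm (Fin (n - 1))}
    (h : IsLastDeletion σ τ) (π : Perm (Fin (n - 1))) :
    #{x | τ x = π x} ≤
      #{x | σ x = Perm.viaEmbeddingHom (Fin.castLEEmb (Nat.sub_le n 1)) π x} + 1 := by
  set ι := Fin.castLEEmb (Nat.sub_le n 1)
  have hsub : ({x | τ x = π x} : Finset _) ⊆
      ({x | σ (ι x) = Perm.viaEmbeddingHom ι π (ι x)} : Finset _) ∪
      ({x | (σ (ι x) : ℕ) = n - 1} : Finset _) := by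
    intro x hx
    simp only [mem_filter, mem_univ, true_and, mem_union] at hx ⊢
    refine or_iff_not_imp_right.mpr fun hx' => ?_
    rw [Perm.viaEmbeddingHom_apply, Perm.viaEmbedding_apply, ← hx]
    exact (h.castLE_apply hx').symm
  have hrestrict :
      #{x | σ (ι x) = Perm.viaEmbeddingHom ι π (ι x)} ≤ #{x | σ x = Perm.viaEmbeddingHom ι π x} :=
    card_le_card_of_injOn ι (fun x hx => by simpa using hx) ι.injective.injOn
  calc _ ≤ _ := card_le_card hsub
    _ ≤ _ := card_union_le _ _
    _ ≤ _ := add_le_add hrestrict (card_filter_apply_eq_last_le_one σ)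

variable (f : Γ →* Perm (Fin n)) {fhat : Γ → Perm (Fin (n - 1))}

lemma apply_mul_of_isLastDeletion (hfhat : ∀ γ, IsLastDeletion (f γ) (fhat γ))
    {γ₁ γ₂ : Γ} {x : Fin (n - 1)}
    (h₂ : (f γ₂ (Fin.castLE (Nat.sub_le n 1) x) : ℕ) ≠ n - 1)
    (h₁₂ : (f (γ₁ * γ₂) (Fin.castLE (Nat.sub_le n 1) x) : ℕ) ≠ n - 1) :
    fhat (γ₁ * γ₂) x = (fhat γ₁ * fhat γ₂) x := by
  have e₂ := (hfhat γ₂).castLE_apply h₂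
  apply Fin.castLE_injective (Nat.sub_le n 1)
  rw [(hfhat _).castLE_apply h₁₂, Perm.mul_apply, (hfhat γ₁).castLE_apply, e₂, map_mul,
    Perm.mul_apply]
  rwa [e₂, ← Perm.mul_apply, ← map_mul]

lemma card_apply_mul_ne_le_two (hfhat : ∀ γ, IsLastDeletion (f γ) (fhat γ)) (γ₁ γ₂ : Γ) :
    #{x | fhat (γ₁ * γ₂) x ≠ (fhat γ₁ * fhat γ₂) x} ≤ 2 := by
  have hsub : ({x | fhat (γ₁ * γ₂) x ≠ (fhat γ₁ * fhat γ₂) x} : Finset _) ⊆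
      ({x | (f γ₂ (Fin.castLE (Nat.sub_le n 1) x) : ℕ) = n - 1} : Finset _) ∪
      ({x | (f (γ₁ * γ₂) (Fin.castLE (Nat.sub_le n 1) x) : ℕ) = n - 1} : Finset _) := by
    intro x hx
    simp only [mem_filter, mem_univ, true_and, mem_union] at hx ⊢
    by_contra! h
    exact hx (apply_mul_of_isLastDeletion f hfhat h.1 h.2)
  calc _ ≤ _ := card_le_card hsub
    _ ≤ _ := card_union_le _ _
    _ ≤ 1 + 1 := add_le_add (card_filter_apply_eq_last_le_one _)
      (card_filter_apply_eq_last_le_one _)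

lemma defectInfty_le_of_isLastDeletion (hfhat : ∀ γ, IsLastDeletion (f γ) (fhat γ))
    (hn : 1 ≤ n) : defectInfty fhat ≤ 2 / ((n : ℝ) - 1) := by
  have hcast : ((n - 1 : ℕ) : ℝ) = n - 1 := by rw [Nat.cast_sub hn, Nat.cast_one]
  refine ciSup_le fun ⟨γ₁, γ₂⟩ => ?_
  rw [dH_eq_card, hcast]
  gcongr
  · linarith [show (1 : ℝ) ≤ n by exact_mod_cast hn]
  · exact_mod_cast card_apply_mul_ne_le_two f hfhat γ₁ γ₂

lemma le_dInfty_of_isLastDeletion (hfhat : ∀ γ, IsLastDeletion (f γ) (fhat γ)) (hn : 2 ≤ n)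
    (htrans : ∀ x y, ∃ γ, f γ x = y) (h : Γ →* Perm (Fin (n - 1))) :
    1 / 2 - 1 / ((n : ℝ) - 1) ≤ dInfty fhat (fun γ => h γ) := by
  have : Nontrivial (Fin n) := Fin.nontrivial_iff_two_le.mpr hn
  obtain ⟨γ, hγ⟩ := exists_two_mul_card_apply_eq_lt f
    ((Perm.viaEmbeddingHom (Fin.castLEEmb (Nat.sub_le n 1))).comp h) htrans
    (star := ⟨n - 1, by omega⟩) fun γ => Perm.viaEmbedding_apply_of_notMem _ _ _ (by
      rintro ⟨x, hx⟩
      have := congrArg Fin.val hx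
      simp only [Fin.castLEEmb_apply, Fin.val_castLE] at this
      omega)
  have hagree := (hfhat γ).card_apply_eq_le (h γ)
  have hsplit : #{x | fhat γ x = h γ x} + #{x | fhat γ x ≠ h γ x} = n - 1 := by
    simpa using card_filter_add_card_filter_not (s := univ) fun x => fhat γ x = h γ x
  have hcount : (n : ℝ) ≤ 2 * #{x | fhat γ x ≠ h γ x} + 3 := by
    simp only [MonoidHom.comp_apply, Fintype.card_fin] at hγ
    exact_mod_cast (by omega : n ≤ 2 * #{x | fhat γ x ≠ h γ x} + 3)
  have hcast : ((n - 1 : ℕ) : ℝ) = n - 1 := by rw [Nat.cast_sub (by omega), Nat.cast_one]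
  have hpos : (0 : ℝ) < n - 1 := by rw [← hcast]; exact_mod_cast (by omega : 0 < n - 1)
  calc 1 / 2 - 1 / ((n : ℝ) - 1) = ((n : ℝ) - 3) / 2 / (n - 1) := by field_simp; ring
    _ ≤ #{x | fhat γ x ≠ h γ x} / ((n : ℝ) - 1) := by gcongr; linarith
    _ = dH (fhat γ) (h γ) := by rw [dH_eq_card, hcast]
    _ ≤ dInfty fhat (fun γ => h γ) :=
      le_ciSup ⟨1, Set.forall_mem_range.mpr fun γ => dH_le_one _ _⟩ γ

end LastDeletion

/-- deleting a point from a transitive action gives a function with small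
uniform local defect which is uniformly far from every homomorphism into `Sym(n-1)`. -/
theorem statement18 {Γ : Type*} [Group Γ] (n : ℕ) (hn : 2 ≤ n)
    (f : Γ →* Equiv.Perm (Fin n)) (htrans : ∀ x y : Fin n, ∃ γ : Γ, f γ x = y)
    (fhat : Γ → Equiv.Perm (Fin (n - 1)))
    (hfhat : ∀ (γ : Γ) (x : Fin (n - 1)),
      (fhat γ x : ℕ) =
        if (f γ (Fin.castLE (Nat.sub_le n 1) x) : ℕ) = n - 1
        then (f γ (f γ (Fin.castLE (Nat.sub_le n 1) x)) : ℕ)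
        else (f γ (Fin.castLE (Nat.sub_le n 1) x) : ℕ)) :
    defectInfty fhat ≤ 2 / ((n : ℝ) - 1) ∧
    ∀ h : Γ →* Equiv.Perm (Fin (n - 1)),
      dInfty fhat (fun γ => h γ) ≥ 1 / 2 - 1 / ((n : ℝ) - 1) :=
  ⟨defectInfty_le_of_isLastDeletion f hfhat (by omega),
    le_dInfty_of_isLastDeletion f hfhat hn htrans⟩
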